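/- There exists a constant c > 0 such that the following holds. Let 0 < a ≤ 1/2, m > 0, and let ω : ℝ² → ℝ be measurable, bounded, with compact support, odd in each coordinate (ω(−y₁, y₂) = −ω(y₁, y₂) and ω(y₁, −y₂) = −ω(y₁, y₂)), nonnegative on the closed first quadrant {y : y₁ ≥ 0, y₂ ≥ 0}, and satisfying ω(y) ≥ m for every y in the first quadrant with a ≤ |y| ≤ 1 whose polar angle θ = arctan(y₂/y₁) lies in [π/16, π/4]. Then I^s(a) = ∫_{|y| ≥ a} 2·y₁·y₂·ω(y)/|y|⁴ dy ≥ c·m·(−log a). -/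

import Mathlib

open Real MeasureTheory

/-- `vec2 a b` is the point `(a, b)` of the Euclidean plane. -/
noncomputable def vec2 (a b : ℝ) : EuclideanSpace ℝ (Fin 2) :=
  (WithLp.equiv 2 (Fin 2 → ℝ)).symm ![a, b]

/-- `I^s(r) = ∫_{|y|≥r} 2 y₁ y₂ ω(y)/|y|⁴ dy`, the Cartesian form of
`∫_r^∞ ∫_0^{2π} sin(2θ) ω(s,θ)/s dθ ds`. -/
noncomputable def Isin (ω : EuclideanSpace ℝ (Fin 2) → ℝ) (r : ℝ) : ℝ :=
  ∫ y : EuclideanSpace ℝ (Fin 2) in {y | r ≤ ‖y‖},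
    2 * y 0 * y 1 * ω y / ‖y‖ ^ 4

/-!
The integrand of `I^s` is nonnegative on the whole plane: by the odd-odd symmetry, `ω` has the
sign of `y₁ y₂`. Hence `I^s(a)` is bounded below by its integral over the wedge
`a ≤ y₁ ≤ √a, y₁/2 ≤ y₂ ≤ y₁`, which lies in the region `a ≤ |y| ≤ 1, π/16 ≤ θ ≤ π/4` where
`ω ≥ m`. There the integrand is at least `m / (4 y₁²)`, and by Fubini this integrates to
`(m/4) ∫_a^{√a} dy₁ / (2 y₁) = m (-log a) / 16`.
-/

open Set

local notation "ℝ²" => EuclideanSpace ℝ (Fin 2)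

lemma mul_mul_nonneg_of_odd_odd {f : ℝ → ℝ → ℝ} (hf₁ : ∀ s t, f (-s) t = -f s t)
    (hf₂ : ∀ s t, f s (-t) = -f s t) (hf : ∀ s t, 0 ≤ s → 0 ≤ t → 0 ≤ f s t) (s t : ℝ) :
    0 ≤ s * t * f s t := by
  rcases le_total 0 s with hs | hs <;> rcases le_total 0 t with ht | ht
  · exact mul_nonneg (mul_nonneg hs ht) (hf s t hs ht)
  · have := hf s (-t) hs (neg_nonneg.2 ht)
    rw [hf₂] at this
    nlinarith [mul_nonneg hs (neg_nonneg.2 ht)]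
  · have := hf (-s) t (neg_nonneg.2 hs) ht
    rw [hf₁] at this
    nlinarith [mul_nonneg (neg_nonneg.2 hs) ht]
  · have := hf (-s) (-t) (neg_nonneg.2 hs) (neg_nonneg.2 ht)
    rw [hf₁, hf₂, neg_neg] at this
    exact mul_nonneg (mul_nonneg_of_nonpos_of_nonpos hs ht) this

lemma div_four_div_sq_le_of_half_le {x y m w : ℝ} (hx : 0 < x) (hxy : x / 2 ≤ y) (hyx : y ≤ x)
    (hm : 0 ≤ m) (hmw : m ≤ w) : m / 4 / x ^ 2 ≤ 2 * x * y * w / (x ^ 2 + y ^ 2) ^ 2 := by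
  have hy : 0 < y := by linarith
  calc m / 4 / x ^ 2 = x ^ 2 * m / (4 * x ^ 4) := by field_simp
    _ ≤ 2 * x * y * w / (4 * x ^ 4) := by gcongr; nlinarith
    _ ≤ 2 * x * y * w / (x ^ 2 + y ^ 2) ^ 2 := by
      have hsq : x ^ 2 + y ^ 2 ≤ 2 * x ^ 2 := by nlinarith
      gcongr
      · exact mul_nonneg (by positivity) (hm.trans hmw)
      · nlinarith [mul_le_mul hsq hsq (by positivity) (by positivity)]

lemma pi_div_sixteen_le_arctan_half : π / 16 ≤ arctan (1 / 2) := by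
  have hpi : π < 3.15 := pi_lt_d2
  have hsin : sin (π / 16) ≤ π / 16 := sin_le (by positivity)
  have hcos : 1 / 2 ≤ cos (π / 16) := by nlinarith [one_sub_sq_div_two_le_cos (x := π / 16), pi_pos]
  rw [← arctan_tan (x := π / 16) (by linarith [pi_pos]) (by linarith [pi_pos]), tan_eq_sin_div_cos]
  refine arctan_strictMono.monotone ?_
  rw [div_le_iff₀ (by linarith)]
  nlinarith [sin_nonneg_of_nonneg_of_le_pi (x := π / 16) (by positivity) (by linarith [pi_pos])]

theorem setIntegral_comp_fst_between {α : Type*} [MeasurableSpace α] {μ : Measure α} [SFinite μ]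
    {s : Set α} {f g : α → ℝ} (hs : MeasurableSet s) (hf : Measurable f) (hg : Measurable g)
    (hfg : ∀ x ∈ s, f x ≤ g x) {h : α → ℝ}
    (hint : IntegrableOn (fun p : α × ℝ => h p.1) {p | p.1 ∈ s ∧ p.2 ∈ Icc (f p.1) (g p.1)}
      (μ.prod volume)) :
    ∫ p in {p : α × ℝ | p.1 ∈ s ∧ p.2 ∈ Icc (f p.1) (g p.1)}, h p.1 ∂μ.prod volume =
      ∫ x in s, (g x - f x) * h x ∂μ := by
  have hmeas := measurableSet_region_between_cc hf hg hs
  rw [← integral_indicator hmeas, ← integral_indicator hs,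
    integral_prod _ ((integrable_indicator_iff hmeas).2 hint)]
  congr 1 with x
  by_cases hx : x ∈ s
  · have hfiber : (fun y => {p : α × ℝ | p.1 ∈ s ∧ p.2 ∈ Icc (f p.1) (g p.1)}.indicator
        (fun p => h p.1) (x, y)) = (Icc (f x) (g x)).indicator (fun _ => h x) := by
      ext y
      by_cases hy : y ∈ Icc (f x) (g x)
      · rw [indicator_of_mem hy, indicator_of_mem (show (x, y) ∈ {p : α × ℝ | p.1 ∈ s ∧
          p.2 ∈ Icc (f p.1) (g p.1)} from ⟨hx, hy⟩)]
      · rw [indicator_of_notMem hy, indicator_of_notMem fun hp => hy hp.2]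
    rw [hfiber, integral_indicator_const _ measurableSet_Icc, indicator_of_mem hx,
      Real.volume_real_Icc_of_le (hfg x hx), smul_eq_mul]
  · simp [indicator, hx]

def wedge (a : ℝ) : Set (ℝ × ℝ) := {p | p.1 ∈ Icc a √a ∧ p.2 ∈ Icc (p.1 / 2) p.1}

lemma measurableSet_wedge (a : ℝ) : MeasurableSet (wedge a) :=
  measurableSet_region_between_cc (f := fun x => x / 2) (g := fun x => x) (by fun_prop)
    measurable_id measurableSet_Icc

lemma integrableOn_wedge {a : ℝ} (ha : 0 < a) (c : ℝ) :
    IntegrableOn (fun p : ℝ × ℝ => c / p.1 ^ 2) (wedge a) := by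
  have hbox : wedge a ⊆ Icc (a, a / 2) (√a, √a) := fun p ⟨⟨h₁, h₂⟩, h₃, h₄⟩ =>
    ⟨⟨h₁, by linarith⟩, ⟨h₂, by linarith⟩⟩
  refine (ContinuousOn.integrableOn_compact isCompact_Icc ?_).mono_set hbox
  exact continuousOn_const.div (continuous_fst.pow 2).continuousOn
    fun p hp => pow_ne_zero 2 (ha.trans_le hp.1.1).ne'

lemma integral_wedge {a : ℝ} (ha : 0 < a) (ha₁ : a ≤ 1) (c : ℝ) :
    ∫ p in wedge a, c / p.1 ^ 2 = c * (-log a) / 4 := by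
  have hle : a ≤ √a := by
    rw [le_sqrt ha.le ha.le]
    nlinarith
  refine (setIntegral_comp_fst_between (f := fun x => x / 2) (g := fun x => x)
    (h := fun x => c / x ^ 2) measurableSet_Icc (by fun_prop) measurable_id
    (fun x hx => by linarith [ha.trans_le hx.1]) (integrableOn_wedge ha c)).trans ?_
  have hintegrand : ∀ x : ℝ, (x - x / 2) * (c / x ^ 2) = c / 2 * x⁻¹ := fun x => by
    rcases eq_or_ne x 0 with rfl | hx
    · simp
    · field_simp; ring
  simp only [hintegrand]
  rw [integral_Icc_eq_integral_Ioc, ← intervalIntegral.integral_of_le hle,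
    intervalIntegral.integral_const_mul, integral_inv_of_pos ha (sqrt_pos.2 ha),
    log_div (sqrt_ne_zero'.2 ha) ha.ne', log_sqrt ha.le]
  ring

lemma vec2_apply_zero_apply_one (y : ℝ²) : vec2 (y 0) (y 1) = y := by
  ext i; fin_cases i <;> rfl

lemma norm_sq_eq_coord (y : ℝ²) : ‖y‖ ^ 2 = y 0 ^ 2 + y 1 ^ 2 := by
  rw [EuclideanSpace.real_norm_sq_eq, Fin.sum_univ_two]

lemma abs_two_mul_coord_le_norm_sq (y : ℝ²) : |2 * y 0 * y 1| ≤ ‖y‖ ^ 2 := by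
  rw [norm_sq_eq_coord, abs_le]
  constructor <;> nlinarith [sq_nonneg (y 0 + y 1), sq_nonneg (y 0 - y 1)]

noncomputable def planeEquivProd : ℝ² ≃ᵐ ℝ × ℝ :=
  (MeasurableEquiv.toLp 2 (Fin 2 → ℝ)).symm.trans MeasurableEquiv.finTwoArrow

lemma planeEquivProd_apply (y : ℝ²) : planeEquivProd y = (y 0, y 1) := rfl

lemma measurePreserving_planeEquivProd : MeasurePreserving planeEquivProd :=
  (volume_preserving_finTwoArrow ℝ).comp
    (EuclideanSpace.volume_preserving_symm_measurableEquiv_toLp (Fin 2))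

noncomputable def isinIntegrand (ω : ℝ² → ℝ) (y : ℝ²) : ℝ := 2 * y 0 * y 1 * ω y / ‖y‖ ^ 4

lemma isinIntegrand_nonneg {ω : ℝ² → ℝ} (hω₁ : ∀ s t, ω (vec2 (-s) t) = -ω (vec2 s t))
    (hω₂ : ∀ s t, ω (vec2 s (-t)) = -ω (vec2 s t))
    (hω : ∀ y : ℝ², 0 ≤ y 0 → 0 ≤ y 1 → 0 ≤ ω y) (y : ℝ²) : 0 ≤ isinIntegrand ω y := by
  have := mul_mul_nonneg_of_odd_odd hω₁ hω₂ (fun s t => hω (vec2 s t)) (y 0) (y 1)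
  rw [vec2_apply_zero_apply_one] at this
  unfold isinIntegrand
  rw [mul_assoc 2, mul_assoc 2]
  positivity

lemma abs_isinIntegrand_le {ω : ℝ² → ℝ} {M : ℝ} (hM : ∀ y, |ω y| ≤ M) {a : ℝ} (ha : 0 < a)
    {y : ℝ²} (hy : a ≤ ‖y‖) : |isinIntegrand ω y| ≤ M / a ^ 2 := by
  have hy₀ : 0 < ‖y‖ := ha.trans_le hy
  have hM₀ : 0 ≤ M := (abs_nonneg _).trans (hM 0)
  calc |isinIntegrand ω y| = |2 * y 0 * y 1| * |ω y| / ‖y‖ ^ 4 := by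
        rw [isinIntegrand, abs_div, abs_mul, abs_of_pos (pow_pos hy₀ 4)]
    _ ≤ ‖y‖ ^ 2 * M / ‖y‖ ^ 4 := by
        gcongr
        exacts [abs_two_mul_coord_le_norm_sq y, hM y]
    _ = M / ‖y‖ ^ 2 := by field_simp
    _ ≤ M / a ^ 2 := by gcongr

lemma integrableOn_isinIntegrand {ω : ℝ² → ℝ} (hω : Measurable ω) {M : ℝ}
    (hM : ∀ y, |ω y| ≤ M) (hc : HasCompactSupport ω) {a : ℝ} (ha : 0 < a) :
    IntegrableOn (isinIntegrand ω) {y | a ≤ ‖y‖} := by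
  have hS : MeasurableSet {y : ℝ² | a ≤ ‖y‖} := measurableSet_le measurable_const measurable_norm
  have hK : MeasurableSet (tsupport ω) := (isClosed_tsupport ω).measurableSet
  have hmeas : Measurable (isinIntegrand ω) := by unfold isinIntegrand; fun_prop
  refine IntegrableOn.of_forall_sdiff_eq_zero (s := {y | a ≤ ‖y‖} ∩ tsupport ω) ?_ hS fun y hy => ?_
  · refine Measure.integrableOn_of_bounded (M := M / a ^ 2) ?_ hmeas.aestronglyMeasurable ?_
    · exact ((measure_mono inter_subset_right).trans_lt hc.isCompact.measure_lt_top).ne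
    · exact (ae_restrict_iff' (hS.inter hK)).2 <| ae_of_all _ fun y hy =>
        abs_isinIntegrand_le hM ha hy.1
  · rw [isinIntegrand, image_eq_zero_of_notMem_tsupport fun h => hy.2 ⟨hy.1, h⟩]
    simp

lemma mem_sector_of_mem_wedge {a : ℝ} (ha : 0 < a) (ha₂ : a ≤ 1 / 2) {y : ℝ²}
    (hy : planeEquivProd y ∈ wedge a) :
    a ≤ ‖y‖ ∧ ‖y‖ ≤ 1 ∧ arctan (y 1 / y 0) ∈ Icc (π / 16) (π / 4) := by
  rw [planeEquivProd_apply] at hy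
  obtain ⟨⟨hay, hya⟩, hxy, hyx⟩ := hy
  have hy₀ : 0 < y 0 := ha.trans_le hay
  have hsq : y 0 ^ 2 ≤ a := (le_sqrt hy₀.le ha.le).1 hya
  have hnorm := norm_sq_eq_coord y
  refine ⟨by nlinarith [norm_nonneg y], by nlinarith [norm_nonneg y], ?_, ?_⟩
  · refine pi_div_sixteen_le_arctan_half.trans (arctan_strictMono.monotone ?_)
    rw [le_div_iff₀ hy₀]
    linarith
  · rw [← arctan_one]
    exact arctan_strictMono.monotone ((div_le_one hy₀).2 hyx)

lemma le_isinIntegrand_of_mem_wedge {ω : ℝ² → ℝ} {a m : ℝ} (ha : 0 < a) (ha₂ : a ≤ 1 / 2)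
    (hm : 0 ≤ m) (hωm : ∀ y : ℝ², 0 ≤ y 0 → 0 ≤ y 1 → a ≤ ‖y‖ → ‖y‖ ≤ 1 →
      arctan (y 1 / y 0) ∈ Icc (π / 16) (π / 4) → m ≤ ω y)
    {y : ℝ²} (hy : planeEquivProd y ∈ wedge a) : m / 4 / y 0 ^ 2 ≤ isinIntegrand ω y := by
  obtain ⟨hya, hy1, harctan⟩ := mem_sector_of_mem_wedge ha ha₂ hy
  rw [planeEquivProd_apply] at hy
  obtain ⟨⟨hay, -⟩, hxy, hyx⟩ := hy
  have hy₀ : 0 < y 0 := ha.trans_le hay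
  rw [isinIntegrand, show ‖y‖ ^ 4 = (‖y‖ ^ 2) ^ 2 by ring, norm_sq_eq_coord]
  exact div_four_div_sq_le_of_half_le hy₀ hxy hyx hm
    (hωm y hy₀.le (by linarith) hya hy1 harctan)

/-- Section 5: lower bound for the key integral `I^s`. For a bounded, compactly supported
vorticity, odd in each Cartesian variable, nonnegative on the first quadrant, and bounded
below by `m` on the first-quadrant annulus `a ≤ |y| ≤ 1` within angles `[π/16, π/4]`,
one has `I^s(a) ≥ c·m·(−log a)` for a universal constant `c > 0`. -/
theorem Isin_lower_bound :
    ∃ c : ℝ, 0 < c ∧ ∀ a m : ℝ, 0 < a → a ≤ 1/2 → 0 < m →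
      ∀ ω : EuclideanSpace ℝ (Fin 2) → ℝ, Measurable ω →
        (∃ M : ℝ, ∀ y, |ω y| ≤ M) → HasCompactSupport ω →
        (∀ s t : ℝ, ω (vec2 (-s) t) = -ω (vec2 s t)) →
        (∀ s t : ℝ, ω (vec2 s (-t)) = -ω (vec2 s t)) →
        (∀ y : EuclideanSpace ℝ (Fin 2), 0 ≤ y 0 → 0 ≤ y 1 → 0 ≤ ω y) →
        (∀ y : EuclideanSpace ℝ (Fin 2), 0 ≤ y 0 → 0 ≤ y 1 →
          a ≤ ‖y‖ → ‖y‖ ≤ 1 →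
          Real.arctan (y 1 / y 0) ∈ Set.Icc (Real.pi / 16) (Real.pi / 4) →
          m ≤ ω y) →
        c * m * (-Real.log a) ≤ Isin ω a := by
  refine ⟨1 / 16, by norm_num, fun a m ha ha₂ hm ω hω ⟨M, hM⟩ hc hω₁ hω₂ hω₀ hωm => ?_⟩
  set W := planeEquivProd ⁻¹' wedge a
  have hint := integrableOn_isinIntegrand hω hM hc ha
  have hWS : W ⊆ {y | a ≤ ‖y‖} := fun y hy => (mem_sector_of_mem_wedge ha ha₂ hy).1
  calc 1 / 16 * m * (-log a) = ∫ p in wedge a, m / 4 / p.1 ^ 2 := by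
        rw [integral_wedge ha (by linarith)]; ring
    _ = ∫ y in W, m / 4 / y 0 ^ 2 :=
        (measurePreserving_planeEquivProd.setIntegral_preimage_emb
          planeEquivProd.measurableEmbedding _ _).symm
    _ ≤ ∫ y in W, isinIntegrand ω y :=
        setIntegral_mono_on
          ((measurePreserving_planeEquivProd.integrableOn_comp_preimage
            planeEquivProd.measurableEmbedding).2 (integrableOn_wedge ha _))
          (hint.mono_set hWS) ((measurableSet_wedge a).preimage planeEquivProd.measurable)
          fun y hy => le_isinIntegrand_of_mem_wedge ha ha₂ hm.le hωm hy
    _ ≤ Isin ω a :=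
        setIntegral_mono_set hint (ae_of_all _ (isinIntegrand_nonneg hω₁ hω₂ hω₀)) hWS.eventuallyLE
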